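/- arXiv:1308.0041 — 2 statements merged into one kernel-verified Lean document; each statement's English description precedes it below -/
import Mathlib

section
/- Let P be a nonnegative real random variable and J a random variable with the Gamma distribution with integer shape n ≥ 1 and scale θ > 0, with P and J independent, and let β > 0. Then the series ∑_{m=n}^∞ (1/m!)·E[(P/(θβ))^m · e^{−P/(θβ)}] converges and ℙ(P ≤ β·J) = 1 − ∑_{m=n}^∞ (1/m!)·E[(P/(θβ))^m · e^{−P/(θβ)}]. -/
open MeasureTheory ProbabilityTheory

/-- The density of the Gamma distribution with shape `k` and scale `θ`:
`x ↦ x^(k-1) * exp(-x/θ) / (Γ(k) * θ^k)` on `(0, ∞)`. -/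
noncomputable def gammaDensity (k θ x : ℝ) : ℝ :=
  Set.indicator (Set.Ioi 0) (fun y => y ^ (k - 1) * Real.exp (-y / θ) / (Real.Gamma k * θ ^ k)) x

/-- `J` has the Gamma distribution with shape `k` and scale `θ` under `μ`. -/
def IsGammaLaw {Ω : Type*} [MeasurableSpace Ω] (μ : Measure Ω) (J : Ω → ℝ) (k θ : ℝ) : Prop :=
  Measure.map J μ = volume.withDensity (fun x => ENNReal.ofReal (gammaDensity k θ x))

/-!
For integer shape the Gamma survival function is a Poisson distribution function:
`ℙ(J ≥ a) = ∑_{m < n} e^{-a/θ} (a/θ)^m / m!`, since the right-hand side, as a function of `a`,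
has derivative minus the Gamma density (the sum telescopes). Conditioning on `P`, which is
independent of `J`, gives `ℙ(P ≤ β J) = ∑_{m < n} E[e^{-X} X^m / m!]` with `X = P/(θβ)`, and the
Poisson weights `e^{-X} X^m / m!` sum to `1` over all `m`, so the complement is the tail series.
-/
open Real Filter Topology Finset
open scoped Nat

theorem hasSum_exp_neg_mul_pow_div_factorial (t : ℝ) :
    HasSum (fun m : ℕ => exp (-t) * t ^ m / m !) 1 := by
  have h := (NormedSpace.expSeries_div_hasSum_exp t).mul_left (exp (-t))
  rw [← exp_eq_exp_ℝ, ← exp_add, neg_add_cancel, exp_zero] at h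
  simpa only [mul_div_assoc] using h

theorem sum_exp_neg_mul_pow_div_factorial_le_one {t : ℝ} (ht : 0 ≤ t) (s : Finset ℕ) :
    ∑ m ∈ s, exp (-t) * t ^ m / m ! ≤ 1 :=
  sum_le_hasSum s (fun m _ => by positivity) (hasSum_exp_neg_mul_pow_div_factorial t)

theorem hasDerivAt_sum_exp_neg_mul_pow_div_factorial (k : ℕ) (t : ℝ) :
    HasDerivAt (fun t => ∑ m ∈ range (k + 1), exp (-t) * t ^ m / m !)
      (-(exp (-t) * t ^ k / k !)) t := by
  induction k with
  | zero => simpa using (hasDerivAt_neg t).exp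
  | succ k ih =>
    have hterm := (((hasDerivAt_neg t).exp).mul (hasDerivAt_pow (k + 1) t)).div_const
      ((k + 1)! : ℝ)
    simp_rw [sum_range_succ _ (k + 1)]
    refine (ih.add hterm).congr_deriv ?_
    rw [Nat.factorial_succ]
    push_cast
    field_simp
    ring

theorem tendsto_sum_exp_neg_mul_pow_div_factorial_atTop (s : Finset ℕ) :
    Tendsto (fun t => ∑ m ∈ s, exp (-t) * t ^ m / m !) atTop (𝓝 0) := by
  simpa using tendsto_finsetSum s fun m _ =>
    ((tendsto_pow_mul_exp_neg_atTop_nhds_zero m).div_const (m ! : ℝ)).congr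
      fun t => by ring

theorem gammaDensity_natCast_succ (k : ℕ) {θ x : ℝ} (hθ : θ ≠ 0) (hx : 0 < x) :
    gammaDensity (k + 1 : ℕ) θ x = exp (-(x / θ)) * (x / θ) ^ k / k ! / θ := by
  rw [gammaDensity, Set.indicator_of_mem (show x ∈ Set.Ioi 0 from hx), Nat.cast_add_one,
    add_sub_cancel_right, Gamma_nat_eq_factorial, ← Nat.cast_add_one, rpow_natCast, rpow_natCast,
    neg_div, div_pow]
  field_simp
  ring

theorem withDensity_gammaDensity_natCast_succ_Ici (k : ℕ) {θ a : ℝ} (hθ : 0 < θ) (ha : 0 ≤ a) :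
    volume.withDensity (fun x => ENNReal.ofReal (gammaDensity (k + 1 : ℕ) θ x)) (Set.Ici a) =
      ENNReal.ofReal (∑ m ∈ range (k + 1), exp (-(a / θ)) * (a / θ) ^ m / m !) := by
  set F : ℝ → ℝ := fun t => ∑ m ∈ range (k + 1), exp (-t) * t ^ m / (m ! : ℝ)
  have hderiv : ∀ x ∈ Set.Ici a,
      HasDerivAt (fun x => -F (x / θ)) (exp (-(x / θ)) * (x / θ) ^ k / k ! / θ) x := by
    intro x _
    have h := ((hasDerivAt_sum_exp_neg_mul_pow_div_factorial k (x / θ)).comp x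
      ((hasDerivAt_id x).div_const θ)).neg
    rwa [neg_mul, neg_neg, ← div_eq_mul_one_div] at h
  have hnonneg : ∀ x ∈ Set.Ioi a, 0 ≤ exp (-(x / θ)) * (x / θ) ^ k / k ! / θ := by
    intro x hx
    have : 0 ≤ x / θ := div_nonneg (ha.trans hx.out.le) hθ.le
    positivity
  have hlim : Tendsto (fun x => -F (x / θ)) atTop (𝓝 0) := by
    simpa using ((tendsto_sum_exp_neg_mul_pow_div_factorial_atTop _).comp
      (tendsto_id.atTop_div_const hθ)).neg
  rw [withDensity_apply _ measurableSet_Ici, ← Measure.restrict_congr_set Ioi_ae_eq_Ici,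
    setLIntegral_congr_fun measurableSet_Ioi fun x hx =>
      congrArg ENNReal.ofReal (gammaDensity_natCast_succ k hθ.ne' (ha.trans_lt hx)),
    ← ofReal_integral_eq_lintegral_ofReal
      (integrableOn_Ioi_deriv_of_nonneg' hderiv hnonneg hlim)
      ((ae_restrict_iff' measurableSet_Ioi).2 (Eventually.of_forall hnonneg)),
    integral_Ioi_of_hasDerivAt_of_nonneg' hderiv hnonneg hlim, zero_sub, neg_neg]

theorem ProbabilityTheory.IndepFun.measure_mem_eq_lintegral {Ω α β : Type*} [MeasurableSpace Ω]
    [MeasurableSpace α] [MeasurableSpace β] {μ : Measure Ω} [IsFiniteMeasure μ]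
    {X : Ω → α} {Y : Ω → β} (hXY : IndepFun X Y μ) (hX : Measurable X) (hY : Measurable Y)
    {s : Set (α × β)} (hs : MeasurableSet s) :
    μ {ω | (X ω, Y ω) ∈ s} = ∫⁻ ω, μ.map Y (Prod.mk (X ω) ⁻¹' s) ∂μ := by
  rw [show {ω | (X ω, Y ω) ∈ s} = (fun ω => (X ω, Y ω)) ⁻¹' s from rfl,
    ← Measure.map_apply (hX.prodMk hY) hs,
    (indepFun_iff_map_prod_eq_prod_map_map hX.aemeasurable hY.aemeasurable).1 hXY,
    Measure.prod_apply hs, lintegral_map (measurable_measure_prodMk_left hs) hX]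

theorem integrable_exp_neg_mul_pow_div_factorial {Ω : Type*} [MeasurableSpace Ω]
    {μ : Measure Ω} [IsFiniteMeasure μ] {X : Ω → ℝ} (hX : Measurable X) (hX0 : ∀ ω, 0 ≤ X ω)
    (m : ℕ) : Integrable (fun ω => exp (-X ω) * X ω ^ m / (m ! : ℝ)) μ :=
  .of_bound (by fun_prop) 1 <| Eventually.of_forall fun ω => by
    simpa [abs_of_nonneg (hX0 ω)] using sum_exp_neg_mul_pow_div_factorial_le_one (hX0 ω) {m}

theorem hasSum_integral_exp_neg_mul_pow_div_factorial {Ω : Type*} [MeasurableSpace Ω]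
    {μ : Measure Ω} [IsProbabilityMeasure μ] {X : Ω → ℝ} (hX : Measurable X)
    (hX0 : ∀ ω, 0 ≤ X ω) :
    HasSum (fun m : ℕ => ∫ ω, exp (-X ω) * X ω ^ m / (m ! : ℝ) ∂μ) 1 := by
  have hbound : ∀ (s : Finset ℕ) ω, ‖∑ m ∈ s, exp (-X ω) * X ω ^ m / (m ! : ℝ)‖ ≤ 1 :=
    fun s ω => by
      rw [Real.norm_of_nonneg (sum_nonneg fun m _ => by have := hX0 ω; positivity)]
      exact sum_exp_neg_mul_pow_div_factorial_le_one (hX0 ω) s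
  rw [hasSum_iff_tendsto_nat_of_nonneg fun m => integral_nonneg fun ω => by
    have := hX0 ω; positivity]
  simp_rw [← integral_finsetSum _ fun m _ => integrable_exp_neg_mul_pow_div_factorial hX hX0 m]
  simpa using tendsto_integral_of_dominated_convergence (μ := μ) (fun _ => 1)
    (fun N => by fun_prop) (integrable_const 1)
    (fun N => Eventually.of_forall (hbound (range N)))
    (Eventually.of_forall fun ω => (hasSum_exp_neg_mul_pow_div_factorial (X ω)).tendsto_sum_nat)

theorem toReal_measure_le_eq_sum_integral_of_isGammaLaw {Ω : Type*} [MeasurableSpace Ω]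
    {μ : Measure Ω} [IsFiniteMeasure μ] {X J : Ω → ℝ} (hX : Measurable X) (hJ : Measurable J)
    (hX0 : ∀ ω, 0 ≤ X ω) {k : ℕ} {θ : ℝ} (hθ : 0 < θ) (hJlaw : IsGammaLaw μ J (k + 1 : ℕ) θ)
    (hXJ : IndepFun X J μ) :
    (μ {ω | X ω ≤ J ω}).toReal =
      ∑ m ∈ range (k + 1), ∫ ω, exp (-(X ω / θ)) * (X ω / θ) ^ m / (m ! : ℝ) ∂μ := by
  have hX0' : ∀ ω, 0 ≤ X ω / θ := fun ω => div_nonneg (hX0 ω) hθ.le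
  have hint : ∀ m, Integrable (fun ω => exp (-(X ω / θ)) * (X ω / θ) ^ m / (m ! : ℝ)) μ :=
    integrable_exp_neg_mul_pow_div_factorial (hX.div_const θ) hX0'
  have hnonneg : ∀ ω, 0 ≤ ∑ m ∈ range (k + 1), exp (-(X ω / θ)) * (X ω / θ) ^ m / (m ! : ℝ) :=
    fun ω => sum_nonneg fun m _ => by have := hX0' ω; positivity
  have hlaw : ∀ ω, μ.map J (Prod.mk (X ω) ⁻¹' {q | q.1 ≤ q.2}) =
      ENNReal.ofReal (∑ m ∈ range (k + 1), exp (-(X ω / θ)) * (X ω / θ) ^ m / m !) :=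
    fun ω => by
      rw [hJlaw, ← withDensity_gammaDensity_natCast_succ_Ici k hθ (hX0 ω)]
      rfl
  have hprob : μ {ω | X ω ≤ J ω} = ∫⁻ ω, μ.map J (Prod.mk (X ω) ⁻¹' {q | q.1 ≤ q.2}) ∂μ :=
    hXJ.measure_mem_eq_lintegral hX hJ (measurableSet_le measurable_fst measurable_snd)
  rw [hprob, lintegral_congr hlaw, ← ofReal_integral_eq_lintegral_ofReal
      (integrable_finsetSum _ fun m _ => hint m) (Eventually.of_forall hnonneg),
    ENNReal.toReal_ofReal (integral_nonneg hnonneg), integral_finsetSum _ fun m _ => hint m]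

/-- The series `∑_{m=n}^∞ (1/m!) E[(P/(θβ))^m e^{-P/(θβ)}]`, indexed by `m = n + m'`,
converges to `1 - ℙ(P ≤ β J)`. -/
theorem stmt_5 {Ω : Type*} [MeasurableSpace Ω] (μ : Measure Ω) [IsProbabilityMeasure μ]
    (P J : Ω → ℝ) (hPm : Measurable P) (hJm : Measurable J)
    (hPnn : ∀ ω, 0 ≤ P ω)
    (n : ℕ) (hn : 1 ≤ n) (θ β : ℝ) (hθ : 0 < θ) (hβ : 0 < β)
    (hJ : IsGammaLaw μ J (n : ℝ) θ)
    (hindep : IndepFun P J μ) :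
    HasSum (fun m : ℕ =>
        (1 / (Nat.factorial (n + m)) : ℝ) *
          ∫ ω, (P ω / (θ * β)) ^ (n + m) * Real.exp (-(P ω / (θ * β))) ∂μ)
      (1 - (μ {ω | P ω ≤ β * J ω}).toReal) := by
  obtain ⟨k, rfl⟩ : ∃ k, n = k + 1 := ⟨n - 1, by omega⟩
  have hscale : ∀ ω, P ω / β / θ = P ω / (θ * β) := fun ω => by rw [div_div, mul_comm β]
  have hevent : {ω | P ω ≤ β * J ω} = {ω | P ω / β ≤ J ω} := by
    ext ω
    simp [div_le_iff₀ hβ, mul_comm]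
  have hcdf := toReal_measure_le_eq_sum_integral_of_isGammaLaw (hPm.div_const β) hJm
    (fun ω => div_nonneg (hPnn ω) hβ.le) hθ hJ
    (hindep.comp (measurable_id.div_const β) measurable_id)
  simp only [hscale] at hcdf
  have htail := (hasSum_nat_add_iff' (k + 1)).2
    (hasSum_integral_exp_neg_mul_pow_div_factorial (μ := μ) (hPm.div_const (θ * β))
      fun ω => div_nonneg (hPnn ω) (by positivity))
  rw [← hcdf, ← hevent] at htail
  refine htail.congr_fun fun m => ?_
  rw [add_comm m, ← integral_const_mul]
  congr with ω
  ring
end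

section
/- Fix D > 0, α > 2, T ≥ 0, g > 0, an integer m ≥ 1 and b > 0. The function F(s) = ∫_0^D r · exp(s·g·r^{−α}·1{g·r^{−α} ≥ T}) dr is m-times differentiable on (−∞, 0), and its m-th derivative at s = −1/b equals (1/α)·g^{2/α}·b^{m − 2/α}·Γ(m − 2/α, (g/b)·max{D^{−α}, T/g}). -/
open MeasureTheory

/-- Upper incomplete gamma function `Γ(a, x) = ∫_x^∞ t^(a-1) e^(-t) dt`. -/
noncomputable def uGamma (a x : ℝ) : ℝ := ∫ t in Set.Ioi x, t ^ (a - 1) * Real.exp (-t)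

/-!
For `s < 0` the threshold only removes the radii `r > r₀ = x₀ ^ (-1/α)`, where
`x₀ = max (D ^ (-α)) (T / g)`; there the exponent vanishes and the integral contributes the
constant `(D² - r₀²) / 2`. On `(0, r₀]` the substitution `y = -s g r ^ (-α)` turns the
integral into `α⁻¹ (-s g) ^ (2/α) Γ(-2/α, -s g x₀)`. By the recurrence
`Γ(a + 1, x) = a Γ(a, x) + x ^ a e^(-x)`, differentiating `s ↦ (-s) ^ (-a) Γ(a, -s c)` just
raises `a` by one, so the `m`-th derivative raises `-2/α` to `m - 2/α`.
-/

open Set Real Filter Topology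

theorem integrableOn_rpow_mul_exp_neg_Ioi (a : ℝ) {x : ℝ} (hx : 0 < x) :
    IntegrableOn (fun t : ℝ => t ^ (a - 1) * exp (-t)) (Ioi x) := by
  refine integrable_of_isBigO_exp_neg one_half_pos ?_ ?_
  · exact (continuousOn_id.rpow_const fun t ht => Or.inl (hx.trans_le ht).ne').mul
      continuousOn_id.neg.rexp
  · simpa only [mul_comm, one_div] using (Gamma_integrand_isLittleO (a - 1)).isBigO

theorem hasDerivAt_uGamma (a : ℝ) {x : ℝ} (hx : 0 < x) :
    HasDerivAt (uGamma a) (-(x ^ (a - 1) * exp (-x))) x := by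
  have hint := integrableOn_rpow_mul_exp_neg_Ioi a (half_pos hx)
  have hcont : ContinuousOn (fun t : ℝ => t ^ (a - 1) * exp (-t)) (Ioi 0) :=
    (continuousOn_id.rpow_const fun t ht => Or.inl (ne_of_gt ht)).mul continuousOn_id.neg.rexp
  have hFTC : HasDerivAt (fun y => ∫ t in x / 2..y, t ^ (a - 1) * exp (-t))
      (x ^ (a - 1) * exp (-x)) x :=
    intervalIntegral.integral_hasDerivAt_right
      ((intervalIntegrable_iff_integrableOn_Ioc_of_le (half_le_self hx.le)).2
        (hint.mono_set Ioc_subset_Ioi_self))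
      (hcont.stronglyMeasurableAtFilter isOpen_Ioi x hx) (hcont.continuousAt (Ioi_mem_nhds hx))
  have hsplit : (fun y => uGamma a (x / 2) - ∫ t in x / 2..y, t ^ (a - 1) * exp (-t))
      =ᶠ[𝓝 x] uGamma a :=
    eventually_of_mem (Ioi_mem_nhds (half_lt_self hx)) fun y hy => by
      show uGamma a (x / 2) - _ = _
      rw [← intervalIntegral.integral_Ioi_sub_Ioi hint (le_of_lt hy), uGamma, uGamma,
        sub_sub_cancel]
  simpa using ((hasDerivAt_const x _).sub hFTC).congr_of_eventuallyEq hsplit.symm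

theorem uGamma_add_one (a : ℝ) {x : ℝ} (hx : 0 < x) :
    uGamma (a + 1) x = a * uGamma a x + x ^ a * exp (-x) := by
  have hderiv : ∀ t ∈ Ici x, HasDerivAt (fun t : ℝ => -(t ^ a * exp (-t)))
      (t ^ (a + 1 - 1) * exp (-t) - a * (t ^ (a - 1) * exp (-t))) t := by
    intro t ht
    have h := ((hasDerivAt_rpow_const (p := a) (Or.inl (hx.trans_le ht).ne')).mul
      (hasDerivAt_neg t).exp).neg
    refine h.congr_deriv ?_
    rw [add_sub_cancel_right]
    ring
  have htend : Tendsto (fun t : ℝ => -(t ^ a * exp (-t))) atTop (𝓝 0) := by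
    simpa using (tendsto_rpow_mul_exp_neg_mul_atTop_nhds_zero a 1 one_pos).neg
  have hint₁ := integrableOn_rpow_mul_exp_neg_Ioi (a + 1) hx
  have hint₂ := (integrableOn_rpow_mul_exp_neg_Ioi a hx).const_mul a
  have h := integral_Ioi_of_hasDerivAt_of_tendsto' hderiv (hint₁.sub hint₂) htend
  rw [integral_sub hint₁ hint₂, integral_const_mul] at h
  rw [uGamma, uGamma]
  linarith

theorem hasDerivAt_neg_rpow_mul_uGamma (a : ℝ) {c s : ℝ} (hc : 0 < c) (hs : s < 0) :
    HasDerivAt (fun s : ℝ => (-s) ^ (-a) * uGamma a (-s * c))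
      ((-s) ^ (-(a + 1)) * uGamma (a + 1) (-s * c)) s := by
  have hu : 0 < -s := neg_pos.2 hs
  have hx : 0 < -s * c := mul_pos hu hc
  have hpow : HasDerivAt (fun s : ℝ => (-s) ^ (-a)) (-1 * -a * (-s) ^ (-a - 1)) s :=
    (hasDerivAt_neg s).rpow_const (Or.inl hu.ne')
  have hΓ : HasDerivAt (fun s : ℝ => uGamma a (-s * c))
      (-((-s * c) ^ (a - 1) * exp (-(-s * c))) * (-1 * c)) s := by
    exact (hasDerivAt_uGamma a hx).comp s ((hasDerivAt_neg s).mul_const c)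
  refine (hpow.mul hΓ).congr_deriv ?_
  rw [uGamma_add_one a hx, mul_rpow hu.le hc.le, mul_rpow hu.le hc.le,
    show -(a + 1) = -a + -1 by ring, show -a - 1 = -a + -1 by ring, rpow_add hu, rpow_neg_one,
    rpow_sub hu, rpow_sub hc, rpow_one, rpow_one, rpow_neg hu.le]
  have : (-s) ^ a ≠ 0 := (rpow_pos_of_pos hu a).ne'
  field_simp
  ring

theorem integral_Ioi_rpow_mul_exp_mul (a : ℝ) {s x : ℝ} (hs : s < 0) (hx : 0 ≤ x) :
    ∫ y in Ioi x, y ^ (a - 1) * exp (s * y) = (-s) ^ (-a) * uGamma a (-s * x) := by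
  have hu : 0 < -s := neg_pos.2 hs
  have h := integral_comp_mul_left_Ioi (fun t => t ^ (a - 1) * exp (-t)) x hu
  have hscale : ∫ y in Ioi x, (-s * y) ^ (a - 1) * exp (-(-s * y))
      = (-s) ^ (a - 1) * ∫ y in Ioi x, y ^ (a - 1) * exp (s * y) := by
    rw [← integral_const_mul]
    refine setIntegral_congr_fun measurableSet_Ioi fun y hy => ?_
    rw [mul_rpow hu.le (hx.trans (le_of_lt hy)), neg_mul, neg_neg, mul_assoc]
  rw [hscale, smul_eq_mul, ← uGamma] at h
  have : (-s) ^ (a - 1) ≠ 0 := (rpow_pos_of_pos hu _).ne'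
  rw [show -a = -(a - 1) + -1 by ring, rpow_add hu, rpow_neg hu.le, rpow_neg_one, mul_assoc, ← h]
  field_simp

theorem intervalIntegral_rpow_mul_comp_rpow_neg (β : ℝ) {α R : ℝ} (hα : 0 < α) (hR : 0 < R)
    (f : ℝ → ℝ) :
    ∫ r in (0 : ℝ)..R, r ^ (β - 1) * f (r ^ (-α)) =
      α⁻¹ * ∫ y in Ioi (R ^ (-α)), y ^ (-(β / α) - 1) * f y := by
  set G := (Ioi (R ^ (-α))).indicator fun y => y ^ (-(β / α) - 1) * f y
  have hsub := integral_comp_rpow_Ioi G (neg_ne_zero.2 hα.ne')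
  have hlhs : EqOn (fun x => (|-α| * x ^ (-α - 1)) • G (x ^ (-α)))
      ((Iio R).indicator fun r => α * (r ^ (β - 1) * f (r ^ (-α)))) (Ioi 0) := by
    intro x (hx : 0 < x)
    by_cases hxR : x < R
    · have hmem : x ^ (-α) ∈ Ioi (R ^ (-α)) := rpow_lt_rpow_of_neg hx hxR (neg_lt_zero.2 hα)
      have hexp : x ^ (-α - 1) * (x ^ (-α)) ^ (-(β / α) - 1) = x ^ (β - 1) := by
        rw [← rpow_mul hx.le, ← rpow_add hx]
        congr 1
        field_simp
        ring
      simp only [G, indicator_of_mem hmem, indicator_of_mem (show x ∈ Iio R from hxR),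
        smul_eq_mul, abs_neg, abs_of_pos hα, ← hexp]
      ring
    · have hmem : x ^ (-α) ∉ Ioi (R ^ (-α)) := fun h =>
        hxR ((rpow_lt_rpow_iff_of_neg hR hx (neg_lt_zero.2 hα)).1 h)
      simp only [G, indicator_of_notMem hmem, indicator_of_notMem (show x ∉ Iio R from hxR),
        smul_zero]
  rw [setIntegral_congr_fun measurableSet_Ioi hlhs, integral_indicator measurableSet_Iio,
    Measure.restrict_restrict measurableSet_Iio, inter_comm, Ioi_inter_Iio,
    ← integral_Ioc_eq_integral_Ioo, ← intervalIntegral.integral_of_le hR.le,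
    intervalIntegral.integral_const_mul, integral_indicator measurableSet_Ioi,
    Measure.restrict_restrict measurableSet_Ioi, Ioi_inter_Ioi,
    max_eq_left (rpow_pos_of_pos hR _).le] at hsub
  rw [← hsub]
  field_simp

theorem intervalIntegral_rpow_mul_exp_mul_rpow_neg (β : ℝ) {α R s : ℝ} (hα : 0 < α)
    (hR : 0 < R) (hs : s < 0) :
    ∫ r in (0 : ℝ)..R, r ^ (β - 1) * exp (s * r ^ (-α)) =
      α⁻¹ * ((-s) ^ (β / α) * uGamma (-(β / α)) (-s * R ^ (-α))) := by
  rw [intervalIntegral_rpow_mul_comp_rpow_neg β hα hR fun y => exp (s * y),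
    integral_Ioi_rpow_mul_exp_mul _ hs (rpow_pos_of_pos hR _).le, neg_neg]

section

variable {E : Type*} [NormedAddCommGroup E] [NormedSpace ℝ E] {U : Set ℝ} {F : ℝ → E}
  {f : ℕ → ℝ → E}

theorem iteratedDerivWithin_succ_eqOn_of_hasDerivAt (hU : IsOpen U)
    (hF : ∀ x ∈ U, HasDerivAt F (f 0 x) x)
    (hf : ∀ n, ∀ x ∈ U, HasDerivAt (f n) (f (n + 1) x) x) (n : ℕ) :
    EqOn (iteratedDerivWithin (n + 1) F U) (f n) U := by
  induction n with
  | zero =>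
    intro x hx
    rw [iteratedDerivWithin_one, derivWithin_of_isOpen hU hx, (hF x hx).deriv]
  | succ n ih =>
    intro x hx
    rw [iteratedDerivWithin_succ, derivWithin_of_isOpen hU hx,
      ((hf n x hx).congr_of_eventuallyEq (eventuallyEq_of_mem (hU.mem_nhds hx) ih)).deriv]

theorem contDiffOn_of_hasDerivAt_seq (hU : IsOpen U) (hF : ∀ x ∈ U, HasDerivAt F (f 0 x) x)
    (hf : ∀ n, ∀ x ∈ U, HasDerivAt (f n) (f (n + 1) x) x) {N : ℕ∞} :
    ContDiffOn ℝ N F U := by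
  refine contDiffOn_of_differentiableOn_deriv fun n _ x hx => ?_
  cases n with
  | zero => exact (hF x hx).differentiableAt.differentiableWithinAt
  | succ n =>
    have hn := iteratedDerivWithin_succ_eqOn_of_hasDerivAt hU hF hf n
    exact ((hf n x hx).congr_of_eventuallyEq
      (eventuallyEq_of_mem (hU.mem_nhds hx) hn)).differentiableAt.differentiableWithinAt

end

theorem intervalIntegrable_mul_exp_of_nonpos {φ : ℝ → ℝ} (hφ : Measurable φ)
    (hφ_nonpos : ∀ r, 0 < r → φ r ≤ 0) {a b : ℝ} (ha : 0 ≤ a) (hb : 0 ≤ b) :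
    IntervalIntegrable (fun r => r * exp (φ r)) volume a b := by
  refine intervalIntegral.intervalIntegrable_id.mono_fun'
    (measurable_id.mul hφ.exp).aestronglyMeasurable ?_
  filter_upwards [ae_restrict_mem measurableSet_uIoc] with r hr
  have hr0 : 0 < r := (le_min ha hb).trans_lt hr.1
  rw [norm_mul, norm_of_nonneg hr0.le, norm_of_nonneg (exp_pos _).le]
  exact mul_le_of_le_one_right hr0.le (exp_le_one_iff.2 (hφ_nonpos r hr0))

theorem intervalIntegrable_mul_exp_threshold {α T g s a b : ℝ} (hg : 0 ≤ g) (hs : s ≤ 0)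
    (ha : 0 ≤ a) (hb : 0 ≤ b) :
    IntervalIntegrable
      (fun r => r * exp (s * g * r ^ (-α) * (if T ≤ g * r ^ (-α) then (1 : ℝ) else 0)))
      volume a b := by
  have hpow : Measurable fun r : ℝ => r ^ (-α) := measurable_id.pow_const _
  have hmeas : Measurable fun r : ℝ =>
      s * g * r ^ (-α) * (if T ≤ g * r ^ (-α) then (1 : ℝ) else 0) :=
    (hpow.const_mul (s * g)).mul <|
      Measurable.ite (measurableSet_le measurable_const (hpow.const_mul g)) measurable_const
        measurable_const
  refine intervalIntegrable_mul_exp_of_nonpos hmeas (fun r hr => ?_) ha hb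
  have : s * g * r ^ (-α) ≤ 0 :=
    mul_nonpos_of_nonpos_of_nonneg (mul_nonpos_of_nonpos_of_nonneg hs hg) (rpow_pos_of_pos hr _).le
  split_ifs <;> simp [this]

theorem le_mul_rpow_neg_iff {D α T g r : ℝ} (hα : 0 < α) (hg : 0 < g) (hr : 0 < r)
    (hrD : r ≤ D) :
    T ≤ g * r ^ (-α) ↔ r ≤ max (D ^ (-α)) (T / g) ^ (-α)⁻¹ := by
  have hDr : D ^ (-α) ≤ r ^ (-α) := rpow_le_rpow_of_nonpos hr hrD (neg_nonpos.2 hα.le)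
  rw [le_rpow_inv_iff_of_neg hr (lt_max_of_lt_left (rpow_pos_of_pos (hr.trans_le hrD) _))
    (neg_lt_zero.2 hα), max_le_iff, and_iff_right hDr, div_le_iff₀' hg]

theorem intervalIntegral_mul_exp_threshold {D α T g s : ℝ} (hD : 0 < D) (hα : 0 < α)
    (hg : 0 < g) (hs : s < 0) :
    ∫ r in (0 : ℝ)..D,
        r * exp (s * g * r ^ (-α) * (if T ≤ g * r ^ (-α) then (1 : ℝ) else 0)) =
      (D ^ 2 - max (D ^ (-α)) (T / g) ^ (-(2 / α))) / 2 + α⁻¹ * g ^ (2 / α) *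
        ((-s) ^ (2 / α) * uGamma (-(2 / α)) (-s * (g * max (D ^ (-α)) (T / g)))) := by
  set x₀ := max (D ^ (-α)) (T / g)
  have hx₀ : 0 < x₀ := (rpow_pos_of_pos hD _).trans_le (le_max_left _ _)
  set r₀ := x₀ ^ (-α)⁻¹
  have hr₀ : 0 < r₀ := rpow_pos_of_pos hx₀ _
  have hr₀D : r₀ ≤ D :=
    (rpow_inv_le_iff_of_neg hx₀ hD (neg_lt_zero.2 hα)).2 (le_max_left _ _)
  have hnear : ∫ r in (0 : ℝ)..r₀,
        r * exp (s * g * r ^ (-α) * (if T ≤ g * r ^ (-α) then (1 : ℝ) else 0))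
      = ∫ r in (0 : ℝ)..r₀, r ^ ((2 : ℝ) - 1) * exp (s * g * r ^ (-α)) := by
    refine intervalIntegral.integral_congr_ae (ae_of_all _ fun r hr => ?_)
    rw [uIoc_of_le hr₀.le] at hr
    rw [if_pos ((le_mul_rpow_neg_iff hα hg hr.1 (hr.2.trans hr₀D)).2 hr.2), mul_one,
      show (2 : ℝ) - 1 = 1 by norm_num, rpow_one]
  have hfar : ∫ r in r₀..D,
        r * exp (s * g * r ^ (-α) * (if T ≤ g * r ^ (-α) then (1 : ℝ) else 0))
      = ∫ r in r₀..D, r := by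
    refine intervalIntegral.integral_congr_ae (ae_of_all _ fun r hr => ?_)
    rw [uIoc_of_le hr₀D] at hr
    have hT := (le_mul_rpow_neg_iff hα hg (hr₀.trans hr.1) hr.2).not.2 hr.1.not_ge
    rw [if_neg hT, mul_zero, exp_zero, mul_one]
  have hint {a b : ℝ} :=
    intervalIntegrable_mul_exp_threshold (α := α) (T := T) (a := a) (b := b) hg.le hs.le
  have hr₀sq : r₀ ^ 2 = x₀ ^ (-(2 / α)) := by
    rw [← rpow_natCast, ← rpow_mul hx₀.le]
    congr 1
    field_simp
    norm_num
  rw [← intervalIntegral.integral_add_adjacent_intervals (hint le_rfl hr₀.le)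
      (hint hr₀.le hD.le), hnear, hfar, integral_id,
    intervalIntegral_rpow_mul_exp_mul_rpow_neg 2 hα hr₀ (mul_neg_of_neg_of_pos hs hg),
    rpow_inv_rpow hx₀.le (neg_lt_zero.2 hα).ne, hr₀sq, ← neg_mul,
    mul_rpow (neg_pos.2 hs).le hg.le, mul_assoc (-s) g x₀]
  ring

theorem stmt_9_general (D α T g b : ℝ) (hD : 0 < D) (hα : 2 < α) (hg : 0 < g)
    (m : ℕ) (hm : 1 ≤ m) (hb : 0 < b) :
    ContDiffOn ℝ m
      (fun s : ℝ => ∫ r in (0:ℝ)..D,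
        r * Real.exp (s * g * r ^ (-α) * (if T ≤ g * r ^ (-α) then (1:ℝ) else 0)))
      (Set.Iio 0) ∧
    iteratedDerivWithin m
      (fun s : ℝ => ∫ r in (0:ℝ)..D,
        r * Real.exp (s * g * r ^ (-α) * (if T ≤ g * r ^ (-α) then (1:ℝ) else 0)))
      (Set.Iio 0) (-1 / b)
      = (1 / α) * g ^ (2 / α) * b ^ ((m : ℝ) - 2 / α) *
          uGamma ((m : ℝ) - 2 / α) ((g / b) * max (D ^ (-α)) (T / g)) := by
  set x₀ := max (D ^ (-α)) (T / g)
  have hc : 0 < g * x₀ := mul_pos hg ((rpow_pos_of_pos hD _).trans_le (le_max_left _ _))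
  set K := α⁻¹ * g ^ (2 / α)
  set f : ℕ → ℝ → ℝ := fun n s =>
    K * ((-s) ^ (-(1 - 2 / α + n)) * uGamma (1 - 2 / α + n) (-s * (g * x₀)))
  have hF : ∀ s ∈ Iio 0, HasDerivAt (fun s : ℝ => ∫ r in (0:ℝ)..D,
      r * exp (s * g * r ^ (-α) * (if T ≤ g * r ^ (-α) then (1:ℝ) else 0))) (f 0 s) s := by
    intro s hs
    have h := ((hasDerivAt_neg_rpow_mul_uGamma (-(2 / α)) hc hs).const_mul K).const_add
      ((D ^ 2 - x₀ ^ (-(2 / α))) / 2)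
    rw [neg_neg, show -(2 / α) + 1 = 1 - 2 / α + ((0 : ℕ) : ℝ) by push_cast; ring] at h
    exact h.congr_of_eventuallyEq (eventuallyEq_of_mem (isOpen_Iio.mem_nhds hs) fun y hy =>
      intervalIntegral_mul_exp_threshold hD (by linarith) hg hy)
  have hf : ∀ n, ∀ s ∈ Iio 0, HasDerivAt (f n) (f (n + 1) s) s := by
    intro n s hs
    have h := (hasDerivAt_neg_rpow_mul_uGamma (1 - 2 / α + n) hc hs).const_mul K
    rwa [show 1 - 2 / α + n + 1 = 1 - 2 / α + ((n + 1 : ℕ) : ℝ) by push_cast; ring] at h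
  obtain ⟨k, rfl⟩ : ∃ k, m = k + 1 := Nat.exists_eq_add_of_le' hm
  have hb' : -1 / b < 0 := div_neg_of_neg_of_pos neg_one_lt_zero hb
  refine ⟨contDiffOn_of_hasDerivAt_seq isOpen_Iio hF hf,
    (iteratedDerivWithin_succ_eqOn_of_hasDerivAt isOpen_Iio hF hf k hb').trans ?_⟩
  simp only [f, K]
  rw [show -(-1 / b) = b⁻¹ by ring, inv_rpow hb.le, rpow_neg hb.le, inv_inv,
    show 1 - 2 / α + k = ((k + 1 : ℕ) : ℝ) - 2 / α by push_cast; ring,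
    show b⁻¹ * (g * x₀) = g / b * x₀ by ring]
  ring

theorem stmt_9 (D α T g b : ℝ) (hD : 0 < D) (hα : 2 < α) (hT : 0 ≤ T) (hg : 0 < g)
    (m : ℕ) (hm : 1 ≤ m) (hb : 0 < b) :
    ContDiffOn ℝ m
      (fun s : ℝ => ∫ r in (0:ℝ)..D,
        r * Real.exp (s * g * r ^ (-α) * (if T ≤ g * r ^ (-α) then (1:ℝ) else 0)))
      (Set.Iio 0) ∧
    iteratedDerivWithin m
      (fun s : ℝ => ∫ r in (0:ℝ)..D,
        r * Real.exp (s * g * r ^ (-α) * (if T ≤ g * r ^ (-α) then (1:ℝ) else 0)))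
      (Set.Iio 0) (-1 / b)
      = (1 / α) * g ^ (2 / α) * b ^ ((m : ℝ) - 2 / α) *
          uGamma ((m : ℝ) - 2 / α) ((g / b) * max (D ^ (-α)) (T / g)) :=
  stmt_9_general D α T g b hD hα hg m hm hb
end
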